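/- For every integer n ≥ 4 and every field F of characteristic zero, the upper central series z_1 ⊆ z_2 ⊆ … of the Lie algebra n_{n,1} satisfies: z_k equals the span of e_1, …, e_k for every 1 ≤ k ≤ n−2 (in particular the center of n_{n,1} is the one-dimensional span of e_1), and z_{n−1} is all of n_{n,1}; hence the dimensions in the upper central series are [1, 2, …, n−2, n]. -/

import Mathlib

/-!
Write `V k` for the span of `e 1, …, e k`. The ideal `A = V (n-1)` is abelian, `L = A ⊕ F e n`,
and on `A` the map `a ↦ ⁅a, e n⁆` is the shift `e k ↦ e (k-1)` (killing `e 1`). Hence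
`⁅L, V (k+1)⁆ ⊆ V k`. Conversely, if `⁅L, m⁆ ⊆ V k` with `k + 1 ≤ n - 2`, then bracketing with
`e (n-1)` kills the `e n`-component of `m`, after which injectivity of the shift on
`e 2, …, e (n-1)` forces `m ∈ V (k+1)`. So `z_k = V k` by induction for `k ≤ n - 2`, and
`z_{n-1} = L` because `⁅L, L⁆ ⊆ V (n-2)`.
-/

/-- The family `e 1, …, e n` is a basis of `L` realizing the Lie brackets of the
nilpotent Lie algebra `n_{n,1}`. -/
def IsNn1Basis (F : Type*) [Field F] (n : ℕ) {L : Type*} [LieRing L] [LieAlgebra F L]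
    (e : ℕ → L) : Prop :=
  LinearIndependent F (fun i : Fin n => e (i.val + 1)) ∧
  Submodule.span F (Set.range (fun i : Fin n => e (i.val + 1))) = ⊤ ∧
  (∀ j k : ℕ, 1 ≤ j → j ≤ n - 1 → 1 ≤ k → k ≤ n - 1 → ⁅e j, e k⁆ = 0) ∧
  ⁅e 1, e n⁆ = 0 ∧
  (∀ k : ℕ, 2 ≤ k → k ≤ n - 1 → ⁅e k, e n⁆ = e (k - 1))

open Set Submodule

section

variable {R L : Type*} [CommRing R] [LieRing L] [LieAlgebra R L]

theorem lie_mem_of_mem_span_of_mem_span {M : Type*} [AddCommGroup M] [Module R M]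
    [LieRingModule L M] [LieModule R L M] {s : Set L} {t : Set M} {W : Submodule R M}
    (h : ∀ a ∈ s, ∀ b ∈ t, ⁅a, b⁆ ∈ W) {x : L} {y : M} (hx : x ∈ span R s) (hy : y ∈ span R t) :
    ⁅x, y⁆ ∈ W := by
  let bracket : L →ₗ[R] M →ₗ[R] M :=
    LinearMap.mk₂ R (fun x y => ⁅x, y⁆) add_lie smul_lie lie_add lie_smul
  have hle : map₂ bracket (span R s) (span R t) ≤ W := by
    rw [map₂_span_span, span_le]
    rintro _ ⟨a, ha, b, hb, rfl⟩
    exact h a ha b hb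
  exact hle (apply_mem_map₂ bracket hx hy)

theorem LieIdeal.finrank_eq_of_toSubmodule_eq {I : LieIdeal R L} {p : Submodule R L}
    (h : (I : Submodule R L) = p) : Module.finrank R I = Module.finrank R p := by
  subst h
  rfl

end

theorem span_image_Icc_succ {R M : Type*} [Semiring R] [AddCommMonoid M] [Module R M]
    (e : ℕ → M) {a k : ℕ} (hak : a ≤ k + 1) :
    span R (e '' Icc a (k + 1)) = span R (e '' Icc a k) ⊔ R ∙ e (k + 1) := by
  rw [← Order.succ_eq_add_one, ← insert_Icc_right_eq_Icc_succ (by simpa using hak), image_insert_eq,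
    span_insert, sup_comm]

theorem range_val_add_one_eq_Icc (n : ℕ) : range (fun i : Fin n => (i : ℕ) + 1) = Icc 1 n := by
  ext j
  simp only [mem_range, mem_Icc]
  exact ⟨by rintro ⟨i, rfl⟩; omega, fun h => ⟨⟨j - 1, by omega⟩, by simp only; omega⟩⟩

namespace IsNn1Basis

variable {F : Type*} [Field F] {n : ℕ} {L : Type*} [LieRing L] [LieAlgebra F L] {e : ℕ → L}
  (he : IsNn1Basis F n e)
include he

theorem linearIndepOn : LinearIndepOn F e (Icc 1 n) := by
  rw [← range_val_add_one_eq_Icc, linearIndepOn_range_iff (fun i j h => Fin.ext (by simpa using h))]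
  exact he.1

theorem span_eq_top : span F (e '' Icc 1 n) = ⊤ := by
  rw [← range_val_add_one_eq_Icc, ← range_comp]
  exact he.2.1

theorem notMem_span {j k : ℕ} (hkj : k < j) (hjn : j ≤ n) : e j ∉ span F (e '' Icc 1 k) :=
  (he.linearIndepOn.mono (insert_subset (by constructor <;> omega)
    (Icc_subset_Icc_right (by omega)))).notMem_span_of_insert (by simp; omega)

theorem finrank_span {k : ℕ} (hk : k ≤ n) : Module.finrank F (span F (e '' Icc 1 k)) = k := by
  rw [image_eq_range, finrank_span_eq_card (he.linearIndepOn.mono (Icc_subset_Icc_right hk))]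
  simp

theorem lie_eq_zero_of_mem_span {a b : L} (ha : a ∈ span F (e '' Icc 1 (n - 1)))
    (hb : b ∈ span F (e '' Icc 1 (n - 1))) : ⁅a, b⁆ = 0 := by
  rw [← Submodule.mem_bot F]
  refine lie_mem_of_mem_span_of_mem_span ?_ ha hb
  rintro _ ⟨i, ⟨hi1, hin⟩, rfl⟩ _ ⟨j, ⟨hj1, hjn⟩, rfl⟩
  rw [he.2.2.1 i j hi1 hin hj1 hjn]
  exact zero_mem _

theorem lie_mem_span_pred {k : ℕ} (hk : k ≤ n - 1) {a : L} (ha : a ∈ span F (e '' Icc 1 k)) :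
    ⁅a, e n⁆ ∈ span F (e '' Icc 1 (k - 1)) := by
  refine lie_mem_of_mem_span_of_mem_span ?_ ha (mem_span_singleton_self (e n))
  rintro _ ⟨i, ⟨hi1, hik⟩, rfl⟩ _ rfl
  obtain rfl | hi2 := eq_or_lt_of_le hi1
  · rw [he.2.2.2.1]
    exact zero_mem _
  · rw [he.2.2.2.2 i hi2 (by omega)]
    exact subset_span ⟨i - 1, ⟨by omega, by omega⟩, rfl⟩

theorem exists_eq_add_smul (hn : 1 ≤ n) (x : L) :
    ∃ a ∈ span F (e '' Icc 1 (n - 1)), ∃ c : F, x = a + c • e n := by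
  have hx : x ∈ span F (e '' Icc 1 (n - 1 + 1)) := by
    rw [Nat.sub_add_cancel hn, he.span_eq_top]
    exact mem_top
  rw [span_image_Icc_succ e (by omega), Nat.sub_add_cancel hn, mem_sup] at hx
  obtain ⟨a, ha, _, hc, rfl⟩ := hx
  obtain ⟨c, rfl⟩ := mem_span_singleton.1 hc
  exact ⟨a, ha, c, rfl⟩

theorem lie_mem_span_of_mem_span_succ {k : ℕ} (hk : k + 1 ≤ n - 1) (x : L) {m : L}
    (hm : m ∈ span F (e '' Icc 1 (k + 1))) : ⁅x, m⁆ ∈ span F (e '' Icc 1 k) := by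
  have hmA : m ∈ span F (e '' Icc 1 (n - 1)) := span_mono (image_mono (Icc_subset_Icc_right hk)) hm
  obtain ⟨a, ha, c, rfl⟩ := he.exists_eq_add_smul (by omega) x
  rw [add_lie, he.lie_eq_zero_of_mem_span ha hmA, zero_add, smul_lie, ← lie_skew, smul_neg]
  exact neg_mem (smul_mem _ _ (he.lie_mem_span_pred hk hm))

theorem lie_mem_span_sub_two (hn : 1 ≤ n) (x y : L) : ⁅x, y⁆ ∈ span F (e '' Icc 1 (n - 2)) := by
  obtain ⟨a, ha, c, rfl⟩ := he.exists_eq_add_smul hn x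
  obtain ⟨b, hb, d, rfl⟩ := he.exists_eq_add_smul hn y
  simp only [add_lie, lie_add, smul_lie, lie_smul, lie_self, he.lie_eq_zero_of_mem_span ha hb,
    smul_zero, add_zero, zero_add, ← lie_skew (e n) b, smul_neg]
  have hshift : ∀ a ∈ span F (e '' Icc 1 (n - 1)), ⁅a, e n⁆ ∈ span F (e '' Icc 1 (n - 2)) :=
    fun a ha => he.lie_mem_span_pred le_rfl ha
  exact add_mem (neg_mem (smul_mem _ _ (hshift b hb))) (smul_mem _ _ (hshift a ha))

theorem mem_span_succ_of_lie_mem_span {k j : ℕ} (hkj : k < j) (hjn : j ≤ n - 1) {a : L}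
    (ha : a ∈ span F (e '' Icc 1 j)) (h : ⁅a, e n⁆ ∈ span F (e '' Icc 1 k)) :
    a ∈ span F (e '' Icc 1 (k + 1)) := by
  induction j, hkj using Nat.le_induction generalizing a with
  | base => exact ha
  | succ j hkj ih =>
    rw [span_image_Icc_succ e (by omega), mem_sup] at ha
    obtain ⟨b, hb, _, hd, rfl⟩ := ha
    obtain ⟨d, rfl⟩ := mem_span_singleton.1 hd
    rw [add_lie, smul_lie, he.2.2.2.2 (j + 1) (by omega) (by omega), Nat.add_sub_cancel] at h
    have hbe : ⁅b, e n⁆ ∈ span F (e '' Icc 1 (j - 1)) := he.lie_mem_span_pred (by omega) hb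
    have hd0 : d = 0 := by
      by_contra hd0
      have hde : d • e j ∈ span F (e '' Icc 1 (j - 1)) := by
        simpa using sub_mem (span_mono (image_mono (Icc_subset_Icc_right (by omega))) h) hbe
      exact he.notMem_span (by omega) (by omega) ((smul_mem_iff _ hd0).1 hde)
    rw [hd0, zero_smul, add_zero] at h ⊢
    exact ih (by omega) hb h

theorem mem_span_succ_of_forall_lie_mem_span {k : ℕ} (hk : k + 1 ≤ n - 2) {m : L}
    (hm : ∀ x : L, ⁅x, m⁆ ∈ span F (e '' Icc 1 k)) : m ∈ span F (e '' Icc 1 (k + 1)) := by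
  obtain ⟨a, ha, c, rfl⟩ := he.exists_eq_add_smul (by omega) m
  have hc : c = 0 := by
    by_contra hc
    have h := hm (e (n - 1))
    rw [lie_add, he.lie_eq_zero_of_mem_span (subset_span ⟨n - 1, ⟨by omega, le_rfl⟩, rfl⟩) ha,
      zero_add, lie_smul, he.2.2.2.2 (n - 1) (by omega) le_rfl, smul_mem_iff _ hc] at h
    exact he.notMem_span (by omega) (by omega) h
  rw [hc, zero_smul, add_zero] at hm ⊢
  refine he.mem_span_succ_of_lie_mem_span (j := n - 1) (by omega) le_rfl ha ?_
  rw [← lie_skew]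
  exact neg_mem (hm (e n))

theorem ucs_toSubmodule {k : ℕ} (hk : k ≤ n - 2) :
    ((⊥ : LieSubmodule F L L).ucs k : Submodule F L) = span F (e '' Icc 1 k) := by
  induction k with
  | zero => simp
  | succ k ih =>
    rw [LieIdeal.toLieSubalgebra_toSubmodule] at ih ⊢
    ext m
    rw [LieSubmodule.ucs_succ, LieSubmodule.mem_toSubmodule, LieSubmodule.mem_normalizer]
    simp_rw [← LieSubmodule.mem_toSubmodule, ih (by omega)]
    exact ⟨he.mem_span_succ_of_forall_lie_mem_span hk,
      fun hm x => he.lie_mem_span_of_mem_span_succ (by omega) x hm⟩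

theorem ucs_eq_top (hn : 2 ≤ n) : (⊥ : LieSubmodule F L L).ucs (n - 1) = ⊤ := by
  rw [show n - 1 = n - 2 + 1 by omega, LieSubmodule.ucs_succ, eq_top_iff]
  intro m _
  rw [LieSubmodule.mem_normalizer]
  intro x
  rw [← LieSubmodule.mem_toSubmodule, ← LieIdeal.toLieSubalgebra_toSubmodule,
    he.ucs_toSubmodule le_rfl]
  exact he.lie_mem_span_sub_two (by omega) x m

end IsNn1Basis

theorem nn1_upper_central_series
    (F : Type*) [Field F] (n : ℕ) (hn : 4 ≤ n)
    (L : Type*) [LieRing L] [LieAlgebra F L] (e : ℕ → L)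
    (he : IsNn1Basis F n e) :
    (∀ k : ℕ, 1 ≤ k → k ≤ n - 2 →
      (((⊥ : LieSubmodule F L L).ucs k : Submodule F L)
        = Submodule.span F (e '' Set.Icc 1 k) ∧
       Module.finrank F ((⊥ : LieSubmodule F L L).ucs k) = k)) ∧
    ((LieAlgebra.center F L : Submodule F L) = Submodule.span F {e 1} ∧
      Module.finrank F (LieAlgebra.center F L) = 1) ∧
    ((⊥ : LieSubmodule F L L).ucs (n - 1) = ⊤ ∧
      Module.finrank F ((⊥ : LieSubmodule F L L).ucs (n - 1)) = n) := by
  have hcenter : (LieAlgebra.center F L : Submodule F L) = span F {e 1} := by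
    rw [LieAlgebra.center, ← LieSubmodule.ucs_bot_one, he.ucs_toSubmodule (by omega), Icc_self,
      image_singleton]
  have htop := he.ucs_eq_top (by omega)
  refine ⟨fun k _ hk => ⟨he.ucs_toSubmodule hk, ?_⟩, ⟨hcenter, ?_⟩, htop, ?_⟩
  · rw [LieIdeal.finrank_eq_of_toSubmodule_eq (he.ucs_toSubmodule hk), he.finrank_span (by omega)]
  · rw [LieIdeal.finrank_eq_of_toSubmodule_eq hcenter,
      finrank_span_singleton (he.linearIndepOn.ne_zero ⟨le_rfl, by omega⟩)]
  · rw [htop, LieIdeal.finrank_eq_of_toSubmodule_eq (p := ⊤) (by simp),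
      ← he.span_eq_top, he.finrank_span le_rfl]
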